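/- arXiv:1107.4599 — 4 statements merged into one kernel-verified Lean document; each statement's English description precedes it below -/
import Mathlib

section
/- Let f: S^1 → ℝ be a continuous function and suppose there is an integer m ≥ 2 with f(x + 1/m) = f(x) for all x ∈ S^1. Then there exist points t1, t2, t3, t4 in counterclockwise cyclic order on S^1 = ℝ/ℤ such that min{f(t1), f(t3)} − max{f(t2), f(t4)} = osc f, where osc f = max f − min f. -/
/-- If `f : S¹ → ℝ` (modelled as a continuous function `f : ℝ → ℝ` satisfying
`f (x + 1/m) = f x` for some integer `m ≥ 2`, hence `1`-periodic), then there are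
points `t₁, t₂, t₃, t₄` in counterclockwise cyclic order on `S¹ = ℝ/ℤ` with
`min {f t₁, f t₃} - max {f t₂, f t₄} = osc f = (max f) - (min f)`. -/
theorem exists_linked_quadruple_realizing_osc (f : ℝ → ℝ) (hf : Continuous f)
    (m : ℕ) (hm : 2 ≤ m) (hper : ∀ x : ℝ, f (x + 1 / m) = f x) :
    ∃ t₁ t₂ t₃ t₄ : ℝ, t₁ < t₂ ∧ t₂ < t₃ ∧ t₃ < t₄ ∧ t₄ < t₁ + 1 ∧
      min (f t₁) (f t₃) - max (f t₂) (f t₄) =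
        sSup (Set.range f) - sInf (Set.range f) := by
  have hm0 : (0:ℝ) < (m:ℝ) := by positivity
  have hc : (0:ℝ) < 1 / m := by positivity
  have hc1 : (1:ℝ) / m ≤ 1 / 2 := by
    apply div_le_div_of_nonneg_left (by norm_num) (by norm_num)
    exact_mod_cast hm
  have hp : Function.Periodic f (1 / m) := hper
  have hrange : f '' Set.Icc 0 (0 + 1 / m) = Set.range f := hp.image_Icc hc 0
  rw [zero_add] at hrange
  have hcomp : IsCompact (Set.Icc (0:ℝ) (1 / m)) := isCompact_Icc
  have hne : (Set.Icc (0:ℝ) (1 / m)).Nonempty := Set.nonempty_Icc.2 hc.le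
  obtain ⟨a, ha, haM⟩ := hcomp.exists_isMaxOn hne hf.continuousOn
  obtain ⟨b, hb, hbL⟩ := hcomp.exists_isMinOn hne hf.continuousOn
  have hMrange : IsGreatest (Set.range f) (f a) := by
    constructor
    · exact Set.mem_range_self a
    · rintro y ⟨x, rfl⟩
      obtain ⟨z, hz, hzx⟩ : ∃ z ∈ Set.Icc (0:ℝ) (1/m), f z = f x := by
        have : f x ∈ f '' Set.Icc (0:ℝ) (1/m) := by rw [hrange]; exact Set.mem_range_self x
        exact this
      rw [← hzx]; exact haM hz
  have hLrange : IsLeast (Set.range f) (f b) := by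
    constructor
    · exact Set.mem_range_self b
    · rintro y ⟨x, rfl⟩
      obtain ⟨z, hz, hzx⟩ : ∃ z ∈ Set.Icc (0:ℝ) (1/m), f z = f x := by
        have : f x ∈ f '' Set.Icc (0:ℝ) (1/m) := by rw [hrange]; exact Set.mem_range_self x
        exact this
      rw [← hzx]; exact hbL hz
  have hsup : sSup (Set.range f) = f a := hMrange.csSup_eq
  have hinf : sInf (Set.range f) = f b := hLrange.csInf_eq
  rw [hsup, hinf]
  -- constant case
  by_cases hab : f a = f b
  · have hconst : ∀ x : ℝ, f x = f a := fun x => le_antisymm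
      (hMrange.2 (Set.mem_range_self x)) (hab ▸ hLrange.2 (Set.mem_range_self x))
    refine ⟨0, 1/4, 1/2, 3/4, by norm_num, by norm_num, by norm_num, by norm_num, ?_⟩
    rw [hconst 0, hconst (1/4), hconst (1/2), hconst (3/4), hab]; simp
  -- replace a, b by versions in [0, 1/m)
  · have hf0 : f (1/m) = f 0 := by have := hper 0; rwa [zero_add] at this
    set a' : ℝ := if a = 1/m then 0 else a with ha'
    set b' : ℝ := if b = 1/m then 0 else b with hb'
    have hfa' : f a' = f a := by
      rw [ha']; split_ifs with h
      · rw [h, hf0]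
      · rfl
    have hfb' : f b' = f b := by
      rw [hb']; split_ifs with h
      · rw [h, hf0]
      · rfl
    have ha'mem : 0 ≤ a' ∧ a' < 1/m := by
      rw [ha']; split_ifs with h
      · exact ⟨le_refl 0, hc⟩
      · exact ⟨ha.1, lt_of_le_of_ne ha.2 h⟩
    have hb'mem : 0 ≤ b' ∧ b' < 1/m := by
      rw [hb']; split_ifs with h
      · exact ⟨le_refl 0, hc⟩
      · exact ⟨hb.1, lt_of_le_of_ne hb.2 h⟩
    have hfa1 : f (a' + 1/m) = f a := by rw [hper, hfa']
    have hfb1 : f (b' + 1/m) = f b := by rw [hper, hfb']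
    have hfb2 : f (b' + 1/m + 1/m) = f b := by rw [hper, hfb1]
    have hne' : a' ≠ b' := fun h => hab (by rw [← hfa', ← hfb', h])
    rcases lt_or_gt_of_ne hne' with h | h
    · refine ⟨a', b', a' + 1/m, b' + 1/m, h, by linarith [hb'mem.2], by linarith, ?_, ?_⟩
      · linarith [hb'mem.2, ha'mem.1, hc1]
      · rw [hfa', hfb', hfa1, hfb1]; simp
    · refine ⟨a', b' + 1/m, a' + 1/m, b' + 1/m + 1/m, by linarith, by linarith,
        by linarith, ?_, ?_⟩
      · linarith [hb'mem.2, hc1]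
      · rw [hfa', hfb1, hfa1, hfb2]; simp
end

section
/- Let f: S^1 → ℝ be continuous and suppose (t1,t2,t3,t4) ∈ S^1 are in counterclockwise cyclic order with min{f(t1), f(t3)} > max{f(t2), f(t4)}. Then f has at least two distinct local minima (points at which f attains a local minimum). -/
lemma exists_localMin_between (f : ℝ → ℝ) (hf : Continuous f) (a b c : ℝ)
    (hab : a < b) (hbc : b < c) (h1 : f b < f a) (h2 : f b < f c) :
    ∃ p, IsLocalMin f p ∧ a < p ∧ p < c := by
  obtain ⟨p, hpmem, hpmin⟩ := (isCompact_Icc (a := a) (b := c)).exists_isMinOn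
    ⟨a, Set.left_mem_Icc.2 (by linarith)⟩ hf.continuousOn
  have hpb : f p ≤ f b := hpmin ⟨by linarith, by linarith⟩
  have ha : a < p := by
    rcases lt_or_eq_of_le hpmem.1 with h | h
    · exact h
    · exfalso; rw [← h] at hpb; linarith
  have hc : p < c := by
    rcases lt_or_eq_of_le hpmem.2 with h | h
    · exact h
    · exfalso; rw [h] at hpb; linarith
  exact ⟨p, hpmin.isLocalMin (Icc_mem_nhds ha hc), ha, hc⟩

/-- If `f : S¹ → ℝ` (modelled as a continuous `1`-periodic function `f : ℝ → ℝ`)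
admits a quadruple `t₁, t₂, t₃, t₄` in counterclockwise cyclic order on `S¹ = ℝ/ℤ`
with `min {f t₁, f t₃} > max {f t₂, f t₄}`, then `f` has at least two local minima
which are distinct as points of the circle (i.e. do not differ by an integer). -/
theorem two_local_minima_of_linked_quadruple (f : ℝ → ℝ) (hf : Continuous f)
    (hper : Function.Periodic f 1) (t₁ t₂ t₃ t₄ : ℝ)
    (h12 : t₁ < t₂) (h23 : t₂ < t₃) (h34 : t₃ < t₄) (h41 : t₄ < t₁ + 1)
    (hlt : max (f t₂) (f t₄) < min (f t₁) (f t₃)) :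
    ∃ p q : ℝ, IsLocalMin f p ∧ IsLocalMin f q ∧ ∀ n : ℤ, p - q ≠ n := by
  have h2m : f t₂ ≤ max (f t₂) (f t₄) := le_max_left _ _
  have h4m : f t₄ ≤ max (f t₂) (f t₄) := le_max_right _ _
  have h1m : min (f t₁) (f t₃) ≤ f t₁ := min_le_left _ _
  have h3m : min (f t₁) (f t₃) ≤ f t₃ := min_le_right _ _
  have hper1 : f (t₁ + 1) = f t₁ := hper t₁
  obtain ⟨p, hp, hp1, hp3⟩ := exists_localMin_between f hf t₁ t₂ t₃ h12 h23
    (by linarith) (by linarith)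
  obtain ⟨q, hq, hq3, hq1⟩ := exists_localMin_between f hf t₃ t₄ (t₁ + 1) h34 h41
    (by linarith) (by rw [hper1]; linarith)
  refine ⟨p, q, hp, hq, fun n hn => ?_⟩
  have hlo : (-1 : ℝ) < n := by rw [← hn]; linarith
  have hhi : (n : ℝ) < 0 := by rw [← hn]; linarith
  have hlo' : (-1 : ℤ) < n := by exact_mod_cast hlo
  have hhi' : n < (0 : ℤ) := by exact_mod_cast hhi
  omega
end

section
/- Let (C,ℓ_C) and (D,ℓ_D) be finite-dimensional filtered vector spaces over a Novikov field Λ, with orthogonal bases {x_1,…,x_m} and {y_1,…,y_n}, and define ℓ^⊗ on C ⊗_Λ D by ℓ^⊗(Σ λ_{ij} x_i ⊗ y_j) = max_{i,j}(ℓ_C(x_i) + ℓ_D(y_j) − ν(λ_{ij})). Then ℓ^⊗ is independent of the choice of orthogonal bases: for any other orthogonal bases {w_i} of C and {z_j} of D, ℓ^⊗(Σ μ_{ij} w_i ⊗ z_j) = max_{i,j}(ℓ_C(w_i) + ℓ_D(z_j) − ν(μ_{ij})). -/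
noncomputable section
open TensorProduct
open Classical in
/-- The valuation `ν(Σ a_g T^g) = min {g : a_g ≠ 0}` (with `ν 0 = ∞`) on the Novikov
field `Λ^{K,Γ}` (realized inside the Hahn series field). -/
def novikovVal {K : Type*} [Field K] {Γ : AddSubgroup ℝ} (a : HahnSeries Γ K) : EReal :=
  if a = 0 then ⊤ else ((a.order : ℝ) : EReal)

/-- `b` is an orthogonal basis for the filtered `Λ`-vector space `(C,ℓ)`, with real
filtration levels `c i = ℓ(b i)`: `ℓ(Σ λ_i x_i) = max_i (ℓ(x_i) − ν(λ_i))`. -/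
def IsOrthogonalBasis {K : Type*} [Field K] {Γ : AddSubgroup ℝ} {C : Type*}
    [AddCommGroup C] [Module (HahnSeries Γ K) C] (ℓ : C → EReal) {m : ℕ}
    (b : Module.Basis (Fin m) (HahnSeries Γ K) C) (c : Fin m → ℝ) : Prop :=
  (∀ i, ℓ (b i) = (c i : EReal)) ∧
  ∀ v : C, ℓ v = ⨆ i, ((c i : EReal) - novikovVal (b.repr v i))

/-- The tensor-product filtration determined by a pair of orthogonal bases:
`ℓ^⊗(Σ λ_{ij} x_i ⊗ y_j) = max_{i,j} (ℓ_C(x_i) + ℓ_D(y_j) − ν(λ_{ij}))`. -/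
def tensorFiltLevel {K : Type*} [Field K] {Γ : AddSubgroup ℝ} {C D : Type*}
    [AddCommGroup C] [Module (HahnSeries Γ K) C]
    [AddCommGroup D] [Module (HahnSeries Γ K) D] {m n : ℕ}
    (b : Module.Basis (Fin m) (HahnSeries Γ K) C) (c : Fin m → ℝ)
    (b' : Module.Basis (Fin n) (HahnSeries Γ K) D) (c' : Fin n → ℝ)
    (z : C ⊗[HahnSeries Γ K] D) : EReal :=
  ⨆ p : Fin m × Fin n,
    (((c p.1 + c' p.2 : ℝ) : EReal) - novikovVal ((b.tensorProduct b').repr z p))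

/-!
For two orthogonal bases `b`, `w` of the same filtered space, the change-of-basis coefficients
satisfy `ν(w.repr (b i) j) ≥ ℓ(w j) - ℓ(b i)`: expand `b i` in the basis `w` and compare with
`ℓ(b i)`. The coefficients of `z` in `w ⊗ w'` are sums of
products of coefficients in `b ⊗ b'` with two such change-of-basis coefficients, so the
ultrametric inequality for `ν` bounds the `w ⊗ w'` level by the `b ⊗ b'` level. By symmetry the
two levels agree.
-/

section NovikovVal

variable {K : Type*} [Field K] {Γ : AddSubgroup ℝ}

@[simp]
lemma novikovVal_zero : novikovVal (0 : HahnSeries Γ K) = ⊤ := if_pos rfl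

lemma novikovVal_of_ne_zero {a : HahnSeries Γ K} (ha : a ≠ 0) :
    novikovVal a = ((a.order : ℝ) : EReal) := if_neg ha

lemma novikovVal_ne_bot (a : HahnSeries Γ K) : novikovVal a ≠ ⊥ := by
  unfold novikovVal; split_ifs <;> simp

lemma novikovVal_mul (a b : HahnSeries Γ K) :
    novikovVal (a * b) = novikovVal a + novikovVal b := by
  rcases eq_or_ne a 0 with rfl | ha
  · simp [EReal.top_add_of_ne_bot (novikovVal_ne_bot b)]
  rcases eq_or_ne b 0 with rfl | hb
  · simp [EReal.add_top_of_ne_bot (novikovVal_ne_bot a)]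
  rw [novikovVal_of_ne_zero (mul_ne_zero ha hb), novikovVal_of_ne_zero ha,
    novikovVal_of_ne_zero hb, HahnSeries.order_mul ha hb]
  norm_cast

lemma min_novikovVal_le_novikovVal_add (a b : HahnSeries Γ K) :
    min (novikovVal a) (novikovVal b) ≤ novikovVal (a + b) := by
  rcases eq_or_ne a 0 with rfl | ha
  · simp
  rcases eq_or_ne b 0 with rfl | hb
  · simp
  rcases eq_or_ne (a + b) 0 with hab | hab
  · simp [hab]
  rw [novikovVal_of_ne_zero ha, novikovVal_of_ne_zero hb, novikovVal_of_ne_zero hab]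
  have hmono : Monotone fun g : Γ => ((g : ℝ) : EReal) := fun _ _ h =>
    EReal.coe_le_coe_iff.2 h
  rw [← hmono.map_min]
  exact hmono (HahnSeries.min_order_le_order_add hab)

lemma coe_sub_novikovVal_sum_le {ι : Type*} (s : Finset ι) (f : ι → HahnSeries Γ K) (r : ℝ)
    {S : EReal} (h : ∀ i ∈ s, (r : EReal) - novikovVal (f i) ≤ S) :
    (r : EReal) - novikovVal (∑ i ∈ s, f i) ≤ S := by
  classical
  induction s using Finset.induction_on with
  | empty => simp
  | insert a s ha ih =>
    rw [Finset.sum_insert ha]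
    refine (EReal.sub_le_sub le_rfl (min_novikovVal_le_novikovVal_add _ _)).trans ?_
    rcases min_choice (novikovVal (f a)) (novikovVal (∑ i ∈ s, f i)) with hmin | hmin <;>
      rw [hmin]
    · exact h a (Finset.mem_insert_self a s)
    · exact ih fun i hi => h i (Finset.mem_insert_of_mem hi)

end NovikovVal

lemma EReal.coe_sub_add_coe_sub (u v : ℝ) (x : EReal) :
    (u : EReal) - (x + ((u - v : ℝ) : EReal)) = v - x := by
  induction x with
  | bot => simp
  | coe r => norm_cast; ring
  | top => rw [EReal.top_add_coe]; simp

theorem Module.Basis.tensorProduct_repr_eq_sum {R M N ι κ ι' κ' : Type*} [CommSemiring R]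
    [AddCommMonoid M] [Module R M] [AddCommMonoid N] [Module R N] [Fintype ι] [Fintype κ]
    (b : Module.Basis ι R M) (w : Module.Basis ι' R M)
    (b' : Module.Basis κ R N) (w' : Module.Basis κ' R N) (z : M ⊗[R] N) (q : ι' × κ') :
    (w.tensorProduct w').repr z q = ∑ p, (b.tensorProduct b').repr z p *
      (w.repr (b p.1) q.1 * w'.repr (b' p.2) q.2) := by
  obtain ⟨j, j'⟩ := q
  conv_lhs => rw [← (b.tensorProduct b').sum_repr z]
  simp only [map_sum, Finsupp.coe_finsetSum, Finset.sum_apply, map_smul, Finsupp.smul_apply,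
    smul_eq_mul, Module.Basis.tensorProduct_apply', Module.Basis.tensorProduct_repr_tmul_apply]
  exact Finset.sum_congr rfl fun p _ => by ring

section Filtration

variable {K : Type*} [Field K] {Γ : AddSubgroup ℝ}
  {C D : Type*} [AddCommGroup C] [Module (HahnSeries Γ K) C]
  [AddCommGroup D] [Module (HahnSeries Γ K) D] {m m' n n' : ℕ}

lemma IsOrthogonalBasis.coe_sub_le_novikovVal_repr {ℓ : C → EReal}
    {b : Module.Basis (Fin m) (HahnSeries Γ K) C} {c : Fin m → ℝ}
    {w : Module.Basis (Fin m') (HahnSeries Γ K) C} {cw : Fin m' → ℝ}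
    (hb : IsOrthogonalBasis ℓ b c) (hw : IsOrthogonalBasis ℓ w cw) (i : Fin m) (j : Fin m') :
    ((cw j - c i : ℝ) : EReal) ≤ novikovVal (w.repr (b i) j) := by
  have hle : (cw j : EReal) - novikovVal (w.repr (b i) j) ≤ c i := by
    rw [← hb.1 i, hw.2 (b i)]
    exact le_iSup (fun j => (cw j : EReal) - novikovVal (w.repr (b i) j)) j
  rw [EReal.sub_le_iff_le_add (.inl (novikovVal_ne_bot _)) (.inr (EReal.coe_ne_bot _))] at hle
  exact EReal.coe_sub _ _ ▸ EReal.sub_le_of_le_add' hle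

lemma tensorFiltLevel_le_of_coe_sub_le_novikovVal_repr
    {b : Module.Basis (Fin m) (HahnSeries Γ K) C} {c : Fin m → ℝ}
    {w : Module.Basis (Fin m') (HahnSeries Γ K) C} {cw : Fin m' → ℝ}
    {b' : Module.Basis (Fin n) (HahnSeries Γ K) D} {c' : Fin n → ℝ}
    {w' : Module.Basis (Fin n') (HahnSeries Γ K) D} {cw' : Fin n' → ℝ}
    (hA : ∀ i j, ((cw j - c i : ℝ) : EReal) ≤ novikovVal (w.repr (b i) j))
    (hA' : ∀ i j, ((cw' j - c' i : ℝ) : EReal) ≤ novikovVal (w'.repr (b' i) j))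
    (z : C ⊗[HahnSeries Γ K] D) :
    tensorFiltLevel w cw w' cw' z ≤ tensorFiltLevel b c b' c' z := by
  refine iSup_le fun ⟨j, j'⟩ => ?_
  rw [Module.Basis.tensorProduct_repr_eq_sum b w b' w']
  refine coe_sub_novikovVal_sum_le _ _ _ fun ⟨i, i'⟩ _ => ?_
  set lam := (b.tensorProduct b').repr z (i, i')
  calc ((cw j + cw' j' : ℝ) : EReal) - novikovVal
        (lam * (w.repr (b i) j * w'.repr (b' i') j'))
      = ((cw j + cw' j' : ℝ) : EReal) - (novikovVal lam +
          (novikovVal (w.repr (b i) j) + novikovVal (w'.repr (b' i') j'))) := by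
        rw [novikovVal_mul, novikovVal_mul]
    _ ≤ ((cw j + cw' j' : ℝ) : EReal) - (novikovVal lam +
          ((cw j + cw' j' - (c i + c' i') : ℝ) : EReal)) := by
        refine EReal.sub_le_sub le_rfl (add_le_add le_rfl ?_)
        rw [show cw j + cw' j' - (c i + c' i') = (cw j - c i) + (cw' j' - c' i') by ring,
          EReal.coe_add]
        exact add_le_add (hA i j) (hA' i' j')
    _ = ((c i + c' i' : ℝ) : EReal) - novikovVal lam := EReal.coe_sub_add_coe_sub _ _ _
    _ ≤ tensorFiltLevel b c b' c' z :=
        le_iSup (fun p : Fin m × Fin n => ((c p.1 + c' p.2 : ℝ) : EReal) -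
          novikovVal ((b.tensorProduct b').repr z p)) (i, i')

end Filtration

/-- The filtration `ℓ^⊗` on `C ⊗_Λ D` induced by orthogonal bases of the
finite-dimensional filtered `Λ`-vector spaces `(C,ℓ_C)` and `(D,ℓ_D)` is independent of
the choice of orthogonal bases. -/
theorem tensorFiltLevel_basis_independent {K : Type*} [Field K] {Γ : AddSubgroup ℝ}
    {C D : Type*} [AddCommGroup C] [Module (HahnSeries Γ K) C]
    [AddCommGroup D] [Module (HahnSeries Γ K) D]
    (ℓC : C → EReal) (ℓD : D → EReal) {m m' n n' : ℕ}
    (b : Module.Basis (Fin m) (HahnSeries Γ K) C) (c : Fin m → ℝ)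
    (w : Module.Basis (Fin m') (HahnSeries Γ K) C) (cw : Fin m' → ℝ)
    (b' : Module.Basis (Fin n) (HahnSeries Γ K) D) (c' : Fin n → ℝ)
    (w' : Module.Basis (Fin n') (HahnSeries Γ K) D) (cw' : Fin n' → ℝ)
    (hb : IsOrthogonalBasis ℓC b c) (hw : IsOrthogonalBasis ℓC w cw)
    (hb' : IsOrthogonalBasis ℓD b' c') (hw' : IsOrthogonalBasis ℓD w' cw') :
    ∀ z : C ⊗[HahnSeries Γ K] D,
      tensorFiltLevel b c b' c' z = tensorFiltLevel w cw w' cw' z := fun z =>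
  le_antisymm
    (tensorFiltLevel_le_of_coe_sub_le_novikovVal_repr
      (hw.coe_sub_le_novikovVal_repr hb) (hw'.coe_sub_le_novikovVal_repr hb') z)
    (tensorFiltLevel_le_of_coe_sub_le_novikovVal_repr
      (hb.coe_sub_le_novikovVal_repr hw) (hb'.coe_sub_le_novikovVal_repr hw') z)

end
end

section
/- Let V be a finite-dimensional real inner product space and let B: ℝ → End(V ⊕ V) be continuous of the special form B(s)(x,y) = (B₁(s)x + B₂(s)y, B₂(s)x + B₁(s)y) with B₁, B₂ continuous, equal to constant symmetric operators B₁^±, B₂^± for ±s ≥ T. Let E(x,y) = (−x,y) and let η₁ = sup_s ‖B₁(s)‖ + sup_s ‖B₂(s)‖. If η > η₁, then the only solution v ∈ W^{1,2}(ℝ; V ⊕ V) of dv/ds + (ηE + B(s))v(s) = 0 is v = 0. -/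
open MeasureTheory Set
open scoped RealInnerProductSpace

/-!
Write `v = (x, y)` and `f(s) = ‖x(s)‖² - ‖y(s)‖²`. Along a solution,
`f' = 2η(‖x‖² + ‖y‖²) - 2(⟪x, B₁x + B₂y⟫ - ⟪y, B₂x + B₁y⟫) ≥ 2(η - ‖B₁(s)‖ - ‖B₂(s)‖)(‖x‖² + ‖y‖²)`,
so `f` is monotone. Since `v ∈ L²`, `f` is integrable, and a monotone integrable function on `ℝ`
vanishes identically. Hence `f' = 0`, which forces `x = y = 0`.
-/

lemma bddAbove_range_norm_of_eq_on_Ici_Iic {E : Type*} [SeminormedAddCommGroup E] {f : ℝ → E}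
    (hf : Continuous f) {T : ℝ} {p m : E} (hp : ∀ s, T ≤ s → f s = p)
    (hm : ∀ s, s ≤ -T → f s = m) : BddAbove (range fun s => ‖f s‖) := by
  have hsub : (range fun s => ‖f s‖) ⊆ (fun s => ‖f s‖) '' Icc (-T) T ∪ {‖p‖, ‖m‖} := by
    rintro _ ⟨s, rfl⟩
    by_cases hTs : T ≤ s
    · simp [hp s hTs]
    by_cases hsT : s ≤ -T
    · simp [hm s hsT]
    exact Or.inl ⟨s, ⟨by linarith, by linarith⟩, rfl⟩
  exact ((isCompact_Icc.image hf.norm).bddAbove.union (toFinite _).bddAbove).mono hsub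

lemma Monotone.eq_zero_of_integrable {f : ℝ → ℝ} (hmono : Monotone f) (hf : Integrable f) :
    f = 0 := by
  have not_integrableOn_const {c : ℝ} (hc : c ≠ 0) {s : Set ℝ} (hs : volume s = ⊤) :
      ¬IntegrableOn (fun _ => c) s := by
    simp [integrableOn_const_iff, hc, hs]
  have dominated {s : ℝ} {I : Set ℝ} (hI : MeasurableSet I)
      (hle : ∀ t ∈ I, ‖f s‖ ≤ ‖f t‖) : IntegrableOn (fun _ => f s) I :=
    Integrable.mono hf.integrableOn aestronglyMeasurable_const (ae_restrict_of_forall_mem hI hle)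
  funext s
  by_contra h
  rcases lt_or_gt_of_ne (h : f s ≠ 0) with hneg | hpos
  · refine not_integrableOn_const hneg.ne Real.volume_Iic
      (dominated (measurableSet_Iic (a := s)) ?_)
    intro t ht
    have := hmono (mem_Iic.1 ht)
    rw [Real.norm_of_nonpos hneg.le, Real.norm_of_nonpos (this.trans hneg.le)]
    linarith
  · refine not_integrableOn_const hpos.ne' Real.volume_Ici
      (dominated (measurableSet_Ici (a := s)) ?_)
    intro t ht
    have := hmono (mem_Ici.1 ht)
    rw [Real.norm_of_nonneg hpos.le, Real.norm_of_nonneg (hpos.le.trans this)]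
    exact this

section ShiftedBlockOp

variable {V : Type*} [NormedAddCommGroup V] [InnerProductSpace ℝ V]

/-- The paper's `ηE + B(s)`, for `B₁(s) = A₁` and `B₂(s) = A₂`. -/
def shiftedBlockOp (η : ℝ) (A₁ A₂ : V →L[ℝ] V) : V × V →L[ℝ] V × V :=
  η • ((-(ContinuousLinearMap.id ℝ V)).prodMap (ContinuousLinearMap.id ℝ V)) +
    ContinuousLinearMap.prod
      (A₁.comp (ContinuousLinearMap.fst ℝ V V) + A₂.comp (ContinuousLinearMap.snd ℝ V V))
      (A₂.comp (ContinuousLinearMap.fst ℝ V V) + A₁.comp (ContinuousLinearMap.snd ℝ V V))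

@[simp]
lemma shiftedBlockOp_apply (η : ℝ) (A₁ A₂ : V →L[ℝ] V) (p : V × V) :
    shiftedBlockOp η A₁ A₂ p = (A₁ p.1 + A₂ p.2 - η • p.1, A₂ p.1 + A₁ p.2 + η • p.2) := by
  ext <;>
    simp only [shiftedBlockOp, add_apply, smul_apply, ContinuousLinearMap.coe_prodMap',
      FunLike.coe_neg, ContinuousLinearMap.coe_id', ContinuousLinearMap.prod_apply,
      ContinuousLinearMap.comp_apply, ContinuousLinearMap.coe_fst', ContinuousLinearMap.coe_snd',
      Prod.fst_add, Prod.snd_add, Prod.smul_fst, Prod.smul_snd, Prod.map_fst, Prod.map_snd,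
      Pi.neg_apply, id_eq, smul_neg] <;>
    abel

lemma inner_add_sub_inner_add_le (A₁ A₂ : V →L[ℝ] V) (x y : V) :
    ⟪x, A₁ x + A₂ y⟫ - ⟪y, A₂ x + A₁ y⟫ ≤ (‖A₁‖ + ‖A₂‖) * (‖x‖ ^ 2 + ‖y‖ ^ 2) := by
  have bound (A : V →L[ℝ] V) (u w : V) : |⟪u, A w⟫| ≤ ‖A‖ * (‖u‖ * ‖w‖) :=
    calc |⟪u, A w⟫| ≤ ‖u‖ * ‖A w‖ := abs_real_inner_le_norm _ _
      _ ≤ ‖u‖ * (‖A‖ * ‖w‖) := by gcongr; exact A.le_opNorm w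
      _ = ‖A‖ * (‖u‖ * ‖w‖) := by ring
  have h₁ := abs_le.1 (bound A₁ x x)
  have h₂ := abs_le.1 (bound A₂ x y)
  have h₃ := abs_le.1 (bound A₂ y x)
  have h₄ := abs_le.1 (bound A₁ y y)
  have hxy : 2 * (‖x‖ * ‖y‖) ≤ ‖x‖ ^ 2 + ‖y‖ ^ 2 := by nlinarith [sq_nonneg (‖x‖ - ‖y‖)]
  rw [inner_add_right, inner_add_right]
  nlinarith [norm_nonneg A₂, mul_le_mul_of_nonneg_left hxy (norm_nonneg A₂)]

lemma hasDerivAt_norm_sq_fst_sub_norm_sq_snd {η : ℝ} {A₁ A₂ : V →L[ℝ] V} {v : ℝ → V × V}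
    {s : ℝ} (hv : HasDerivAt v (-shiftedBlockOp η A₁ A₂ (v s)) s) :
    HasDerivAt (fun t => ‖(v t).1‖ ^ 2 - ‖(v t).2‖ ^ 2)
      (2 * η * (‖(v s).1‖ ^ 2 + ‖(v s).2‖ ^ 2) -
        2 * (⟪(v s).1, A₁ (v s).1 + A₂ (v s).2⟫ - ⟪(v s).2, A₂ (v s).1 + A₁ (v s).2⟫)) s := by
  have hx := (hasFDerivAt_fst.comp_hasDerivAt s hv).norm_sq
  have hy := (hasFDerivAt_snd.comp_hasDerivAt s hv).norm_sq
  refine (hx.sub hy).congr_deriv ?_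
  simp only [Function.comp_apply, ContinuousLinearMap.coe_fst', ContinuousLinearMap.coe_snd',
    shiftedBlockOp_apply, Prod.neg_mk, inner_neg_right, inner_sub_right, inner_add_right,
    real_inner_smul_right, real_inner_self_eq_norm_sq]
  ring

theorem eq_zero_of_hasDerivAt_neg_shiftedBlockOp {η : ℝ} {A₁ A₂ : ℝ → V →L[ℝ] V}
    (hA : ∀ s, ‖A₁ s‖ + ‖A₂ s‖ < η) {v : ℝ → V × V}
    (hv : ∀ s, HasDerivAt v (-shiftedBlockOp η (A₁ s) (A₂ s) (v s)) s) (hL2 : MemLp v 2) :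
    v = 0 := by
  set f : ℝ → ℝ := fun t => ‖(v t).1‖ ^ 2 - ‖(v t).2‖ ^ 2
  have hf (s : ℝ) : HasDerivAt f _ s := hasDerivAt_norm_sq_fst_sub_norm_sq_snd (hv s)
  have hf_lower (s : ℝ) : 2 * (η - (‖A₁ s‖ + ‖A₂ s‖)) * (‖(v s).1‖ ^ 2 + ‖(v s).2‖ ^ 2) ≤
      2 * η * (‖(v s).1‖ ^ 2 + ‖(v s).2‖ ^ 2) -
        2 * (⟪(v s).1, A₁ s (v s).1 + A₂ s (v s).2⟫ - ⟪(v s).2, A₂ s (v s).1 + A₁ s (v s).2⟫) := by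
    linarith [inner_add_sub_inner_add_le (A₁ s) (A₂ s) (v s).1 (v s).2]
  have hmono : Monotone f := monotone_of_hasDerivAt_nonneg hf fun s =>
    le_trans (by have := hA s; positivity) (hf_lower s)
  have hint : Integrable f :=
    ((memLp_two_iff_integrable_sq_norm hL2.fst.1).1 hL2.fst).sub
      ((memLp_two_iff_integrable_sq_norm hL2.snd.1).1 hL2.snd)
  have hf_zero := hmono.eq_zero_of_integrable hint
  funext s
  show v s = 0
  have hderiv_zero := (hf s).unique (by rw [hf_zero]; exact hasDerivAt_const s 0)
  have hsum : ‖(v s).1‖ ^ 2 + ‖(v s).2‖ ^ 2 ≤ 0 := by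
    have := hf_lower s
    rw [hderiv_zero] at this
    nlinarith [hA s]
  have h₁ : (v s).1 = 0 := by
    rw [← norm_eq_zero]; nlinarith [sq_nonneg ‖(v s).1‖, sq_nonneg ‖(v s).2‖, norm_nonneg (v s).1]
  have h₂ : (v s).2 = 0 := by
    rw [← norm_eq_zero]; nlinarith [sq_nonneg ‖(v s).1‖, sq_nonneg ‖(v s).2‖, norm_nonneg (v s).2]
  exact Prod.ext h₁ h₂

end ShiftedBlockOp

theorem sobolev_solution_vanishes_of_large_eta_general
    {V : Type*} [NormedAddCommGroup V] [InnerProductSpace ℝ V]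
    (B₁ B₂ : ℝ → (V →L[ℝ] V)) (hB₁c : Continuous B₁) (hB₂c : Continuous B₂)
    (T : ℝ) (B₁p B₂p B₁m B₂m : V →L[ℝ] V)
    (hplus : ∀ s : ℝ, T ≤ s → B₁ s = B₁p ∧ B₂ s = B₂p)
    (hminus : ∀ s : ℝ, s ≤ -T → B₁ s = B₁m ∧ B₂ s = B₂m)
    (η : ℝ)
    (hη : sSup (Set.range fun s => ‖B₁ s‖) + sSup (Set.range fun s => ‖B₂ s‖) < η)
    (v : ℝ → V × V) (hv : Differentiable ℝ v)
    (heq : ∀ s : ℝ,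
      deriv v s +
        (η • ((-(ContinuousLinearMap.id ℝ V)).prodMap (ContinuousLinearMap.id ℝ V)) +
          ContinuousLinearMap.prod
            ((B₁ s).comp (ContinuousLinearMap.fst ℝ V V) +
              (B₂ s).comp (ContinuousLinearMap.snd ℝ V V))
            ((B₂ s).comp (ContinuousLinearMap.fst ℝ V V) +
              (B₁ s).comp (ContinuousLinearMap.snd ℝ V V))) (v s) = 0)
    (hL2 : MemLp v 2 volume) :
    v = 0 := by
  have hbdd₁ := bddAbove_range_norm_of_eq_on_Ici_Iic hB₁c
    (fun s hs => (hplus s hs).1) (fun s hs => (hminus s hs).1)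
  have hbdd₂ := bddAbove_range_norm_of_eq_on_Ici_Iic hB₂c
    (fun s hs => (hplus s hs).2) (fun s hs => (hminus s hs).2)
  have hnorm (s : ℝ) : ‖B₁ s‖ + ‖B₂ s‖ < η :=
    (add_le_add (le_csSup hbdd₁ ⟨s, rfl⟩) (le_csSup hbdd₂ ⟨s, rfl⟩)).trans_lt hη
  have hderiv (s : ℝ) : HasDerivAt v (-shiftedBlockOp η (B₁ s) (B₂ s) (v s)) s := by
    have hv' := (hv s).hasDerivAt
    rwa [eq_neg_of_add_eq_zero_left (heq s)] at hv'
  exact eq_zero_of_hasDerivAt_neg_shiftedBlockOp hnorm hderiv hL2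

/-- Let `V` be a finite-dimensional real inner product space, `E(x,y) = (−x,y)` on
`V ⊕ V`, and let `B(s)(x,y) = (B₁(s)x + B₂(s)y, B₂(s)x + B₁(s)y)` with `B₁, B₂`
continuous families of operators on `V`, equal to constant symmetric operators
`B₁^±, B₂^±` for `±s ≥ T`.  Let `η₁ = sup_s ‖B₁(s)‖ + sup_s ‖B₂(s)‖`.  If `η > η₁`,
then the only solution `v ∈ W^{1,2}(ℝ; V ⊕ V)` (square-integrable, differentiable, with
square-integrable derivative) of `dv/ds + (ηE + B(s))v(s) = 0` is `v = 0`. -/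
theorem sobolev_solution_vanishes_of_large_eta
    {V : Type*} [NormedAddCommGroup V] [InnerProductSpace ℝ V] [FiniteDimensional ℝ V]
    (B₁ B₂ : ℝ → (V →L[ℝ] V)) (hB₁c : Continuous B₁) (hB₂c : Continuous B₂)
    (T : ℝ) (hT : 0 < T) (B₁p B₂p B₁m B₂m : V →L[ℝ] V)
    (hB₁p : IsSelfAdjoint B₁p) (hB₂p : IsSelfAdjoint B₂p)
    (hB₁m : IsSelfAdjoint B₁m) (hB₂m : IsSelfAdjoint B₂m)
    (hplus : ∀ s : ℝ, T ≤ s → B₁ s = B₁p ∧ B₂ s = B₂p)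
    (hminus : ∀ s : ℝ, s ≤ -T → B₁ s = B₁m ∧ B₂ s = B₂m)
    (η : ℝ)
    (hη : sSup (Set.range fun s => ‖B₁ s‖) + sSup (Set.range fun s => ‖B₂ s‖) < η)
    (v : ℝ → V × V) (hv : Differentiable ℝ v)
    (heq : ∀ s : ℝ,
      deriv v s +
        (η • ((-(ContinuousLinearMap.id ℝ V)).prodMap (ContinuousLinearMap.id ℝ V)) +
          ContinuousLinearMap.prod
            ((B₁ s).comp (ContinuousLinearMap.fst ℝ V V) +
              (B₂ s).comp (ContinuousLinearMap.snd ℝ V V))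
            ((B₂ s).comp (ContinuousLinearMap.fst ℝ V V) +
              (B₁ s).comp (ContinuousLinearMap.snd ℝ V V))) (v s) = 0)
    (hL2 : MemLp v 2 volume) (hL2' : MemLp (deriv v) 2 volume) :
    v = 0 :=
  sobolev_solution_vanishes_of_large_eta_general B₁ B₂ hB₁c hB₂c T B₁p B₂p B₁m B₂m hplus hminus η hη
    v hv heq hL2
end
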